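/- arXiv:1404.0154 — 2 statements merged into one kernel-verified Lean document; each statement's English description precedes it below -/
import Mathlib

section
/- Let T be a rooted tree directed toward its root, with edge set E and a set B of leaves. For an edge set X, the blue overflow b̄(X) is the least subset Y of E such that (i) Y contains every edge of E \ X whose starting vertex lies in B, and (ii) for every edge st ∈ E \ (X ∪ Y), the accumulation A(s, Y, X) ≤ 0, where A(v, Y, X) is the number of edges of Y ending at v minus the number of edges of Y starting at v, minus the same quantity for X. Then the blue overflow is antitone: if X ⊆ Y then b̄(Y) ⊆ b̄(X). -/
open Classical

/-- A (possibly infinite) locally finite tree with all edges directed toward the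
root: each non-root vertex `v` has a unique outgoing edge `v → parent v`,
encoded by its tail `v`. -/
structure RTree (V : Type*) where
  root : V
  parent : V → V
  parent_root : parent root = root
  reaches : ∀ v, ∃ n : ℕ, parent^[n] v = root
  locFin : ∀ v, {s | parent s = v ∧ s ≠ root}.Finite

namespace RTree

variable {V : Type*} (T : RTree V)

/-- The upward neighbours of `v`. -/
def children (v : V) : Set V := {s | T.parent s = v ∧ s ≠ T.root}

/-- A leaf is a vertex with no incoming edges. -/
def IsLeaf (v : V) : Prop := T.children v = ∅

/-- `A(v, X)`: in-degree minus out-degree of `v` in the edge set `X`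
(edges being encoded by their tails). -/
noncomputable def A (X : Set V) (v : V) : ℤ :=
  ((T.children v ∩ X).ncard : ℤ) - (if v ∈ X ∧ v ≠ T.root then 1 else 0)

/-- `A(v, X, Y) = A(v, X) - A(v, Y)`. -/
noncomputable def A2 (X Y : Set V) (v : V) : ℤ := T.A X v - T.A Y v

/-- `V(X)`: the vertices incident with an edge of `X`. -/
def VX (X : Set V) : Set V := X ∪ T.parent '' X

/-- `ter X`: the vertices at which no edge of `X` starts. -/
def ter (X : Set V) : Set V := {v | v ∉ X}

/-- An edge set is rayless if it contains no ray of `T`. -/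
def Rayless (X : Set V) : Prop :=
  ¬ ∃ f : ℕ → V, (∀ n, f n ∈ X) ∧ ∀ n, T.parent (f (n + 1)) = f n

/-- A leafless forest: every vertex of `V(S)` has an incoming `S`-edge. -/
def Leafless (S : Set V) : Prop :=
  ∀ v ∈ T.VX S, ∃ s ∈ S, T.parent s = v

/-- The flow `b(X)` to `X` from the leaf set `B`: the union of the edge sets of
those paths starting at a leaf in `B` all of whose interior vertices are not
incident with an edge from `X`. -/
def flow (B X : Set V) : Set V :=
  {e | e ≠ T.root ∧ ∃ b ∈ B, ∃ n : ℕ, T.parent^[n] b = e ∧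
    ∀ k, 1 ≤ k → k ≤ n → T.parent^[k] b ∉ T.VX X}

end RTree

namespace RTree

variable {V : Type*} (T : RTree V)

/-- `Y` satisfies the defining conditions of the blue overflow of `X` (for the
set `B` of blue leaves): (i) `Y` contains every edge of `E \ X` starting at a
vertex of `B`, and (ii) for every edge `st ∈ E \ (X ∪ Y)` we have
`A(s, Y, X) ≤ 0`. -/
def OvClosed (B X Y : Set V) : Prop :=
  (∀ s, s ∈ B → s ∉ X → s ≠ T.root → s ∈ Y) ∧
  (∀ s, s ≠ T.root → s ∉ X → s ∉ Y → T.A2 Y X s ≤ 0)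

end RTree

/-- The blue overflow, i.e. the least set `Y` satisfying the
conditions `OvClosed`, is antitone: if `X ⊆ Y` then `b̄(Y) ⊆ b̄(X)`. -/
theorem stmt3 {V : Type*} (T : RTree V) (B : Set V)
    (hB : ∀ b ∈ B, T.IsLeaf b ∧ b ≠ T.root)
    (X Y bX bY : Set V) (hX : T.root ∉ X) (hY : T.root ∉ Y)
    (hbX : T.OvClosed B X bX ∧ ∀ Z, T.OvClosed B X Z → bX ⊆ Z)
    (hbY : T.OvClosed B Y bY ∧ ∀ Z, T.OvClosed B Y Z → bY ⊆ Z)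
    (hXY : X ⊆ Y) :
    bY ⊆ bX := by
  obtain ⟨⟨hXi, hXii⟩, hXmin⟩ := hbX
  obtain ⟨⟨hYi, hYii⟩, hYmin⟩ := hbY
  have hZ : T.OvClosed B Y (bX \ Y) := by
    constructor
    · intro s hsB hsY hsr
      exact ⟨hXi s hsB (fun h => hsY (hXY h)) hsr, hsY⟩
    · intro s hsr hsY hsZ
      have hsX : s ∉ X := fun h => hsY (hXY h)
      have hsbX : s ∉ bX := fun h => hsZ ⟨h, hsY⟩
      have h1 := hXii s hsr hsX hsbX
      have hfin : (T.children s).Finite := T.locFin s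
      unfold RTree.A2 RTree.A at h1 ⊢
      simp only [hsX, hsbX, hsY, hsZ, false_and, if_false, if_neg,
        not_false_eq_true, sub_zero] at h1 ⊢
      have m1 : (T.children s ∩ (bX \ Y)).ncard ≤ (T.children s ∩ bX).ncard :=
        Set.ncard_le_ncard (Set.inter_subset_inter_right _ Set.diff_subset)
          (hfin.subset Set.inter_subset_left)
      have m3 : (T.children s ∩ X).ncard ≤ (T.children s ∩ Y).ncard :=
        Set.ncard_le_ncard (Set.inter_subset_inter_right _ hXY)
          (hfin.subset Set.inter_subset_left)
      have m2 : (T.children s ∩ bX).ncard ≤ (T.children s ∩ X).ncard := by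
        exact_mod_cast sub_nonpos.mp h1
      have : (T.children s ∩ (bX \ Y)).ncard ≤ (T.children s ∩ Y).ncard :=
        le_trans m1 (le_trans m2 m3)
      exact sub_nonpos.mpr (by exact_mod_cast this)
  exact fun e he => ((hYmin _ hZ) he).1
end

section
/- Let T be a rooted tree directed toward its root, B a set of leaves, and X an edge set. The recursive construction of the blue overflow—starting with Y_0 the set of all edges in E \ X starting at a vertex of B, at successor steps adding any edge st ∈ E \ (X ∪ Y_β) with A(s, Y_β, X) ≥ 1 if one exists and otherwise stopping, and taking unions at limits—terminates, and its result does not depend on the choices made during the construction. -/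
/-!
Every run is monotone and stays inside each set that contains `Y₀` and is closed under the
extension rule. A run that has stopped is itself such a set, so it is the least one, whatever
choices were made. A run cannot go on forever: its sets would then increase strictly along all
ordinals, whereas `V` is countable, the tree being locally finite with every vertex reaching
the root.
-/

open Classical

namespace RTree

variable {V : Type*} (T : RTree V)

/-- The edge `s` (with head `parent s`) is a valid extension of the current set
`Z` in the recursive construction of the blue overflow of `X`:
`s ∈ E \ (X ∪ Z)` and `A(s, Z, X) ≥ 1`. -/
def ValidExt (X Z : Set V) (s : V) : Prop :=
  s ≠ T.root ∧ s ∉ X ∧ s ∉ Z ∧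
    (T.children s ∩ X).ncard + 1 ≤ (T.children s ∩ Z).ncard

universe u_2 in
/-- A run of the recursive construction of the blue overflow of `X` (for the
set `B` of blue leaves): start with all edges of `E \ X` starting in `B`; at
each successor step add some valid extension if one exists, otherwise keep the
set unchanged; take unions at limit steps. -/
structure Run (B X : Set V) where
  Z : Ordinal.{u_2} → Set V
  zero : Z 0 = {s | s ∈ B ∧ s ∉ X ∧ s ≠ T.root}
  succ : ∀ α : Ordinal,
    (∃ s, T.ValidExt X (Z α) s ∧ Z (α + 1) = Z α ∪ {s}) ∨
    ((¬ ∃ s, T.ValidExt X (Z α) s) ∧ Z (α + 1) = Z α)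
  limit : ∀ α : Ordinal, Order.IsSuccLimit α → Z α = ⋃ β < α, Z β

end RTree

namespace RTree

variable {V : Type*} (T : RTree V)

theorem children_finite (v : V) : (T.children v).Finite := T.locFin v

theorem finite_setOf_iterate_parent_eq_root (n : ℕ) :
    {v | T.parent^[n] v = T.root}.Finite := by
  induction n with
  | zero => simp
  | succ n ih =>
    refine ((ih.biUnion fun u _ => T.children_finite u).union
      (Set.finite_singleton T.root)).subset ?_
    intro v hv
    replace hv : T.parent^[n] (T.parent v) = T.root := hv
    by_cases hroot : v = T.root
    · exact Or.inr hroot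
    · exact Or.inl (Set.mem_biUnion hv ⟨rfl, hroot⟩)

theorem countable (T : RTree V) : Countable V := by
  refine Set.countable_univ_iff.mp <| (Set.countable_iUnion fun n =>
    (T.finite_setOf_iterate_parent_eq_root n).countable).mono fun v _ => ?_
  obtain ⟨n, hn⟩ := T.reaches v
  exact Set.mem_iUnion.mpr ⟨n, hn⟩

variable (B X : Set V)

/-- The set `Y₀` at which every run starts. -/
def startSet : Set V := {s | s ∈ B ∧ s ∉ X ∧ s ≠ T.root}

def ExtClosed (W : Set V) : Prop :=
  ∀ s, s ≠ T.root → s ∉ X → (T.children s ∩ X).ncard + 1 ≤ (T.children s ∩ W).ncard → s ∈ W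

def extClosure : Set V := ⋂₀ {W | T.startSet B X ⊆ W ∧ T.ExtClosed X W}

theorem extClosed_of_not_exists_validExt {W : Set V} (h : ¬ ∃ s, T.ValidExt X W s) :
    T.ExtClosed X W :=
  fun s hroot hX hcard => by_contra fun hW => h ⟨s, hroot, hX, hW, hcard⟩

namespace Run

variable {T B X} (R : T.Run B X)

theorem Z_subset_succ (α : Ordinal) : R.Z α ⊆ R.Z (α + 1) := by
  rcases R.succ α with ⟨s, _, h⟩ | ⟨_, h⟩ <;> rw [h]
  exact Set.subset_union_left

theorem Z_ssubset_succ {α : Ordinal} (h : ∃ s, T.ValidExt X (R.Z α) s) :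
    R.Z α ⊂ R.Z (α + 1) := by
  obtain ⟨s, hs, hsucc⟩ := (R.succ α).resolve_right fun h' => h'.1 h
  rw [hsucc]
  exact (Set.ssubset_iff_of_subset Set.subset_union_left).mpr ⟨s, Or.inr rfl, hs.2.2.1⟩

theorem monotone_Z : Monotone R.Z := by
  intro α β
  induction β using Ordinal.limitRecOn generalizing α with
  | zero => intro h; rw [nonpos_iff_eq_zero.mp h]
  | add_one β ih =>
    intro h
    rcases h.lt_or_eq with h | rfl
    · exact (ih (Order.lt_add_one_iff.mp h)).trans (R.Z_subset_succ β)
    · exact subset_rfl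
  | limit β hβ _ =>
    intro h
    rcases h.lt_or_eq with h | rfl
    · rw [R.limit β hβ]
      exact Set.subset_biUnion_of_mem (u := R.Z) h
    · exact subset_rfl

theorem Z_subset_of_extClosed {W : Set V} (hW₀ : T.startSet B X ⊆ W) (hW : T.ExtClosed X W)
    (α : Ordinal) : R.Z α ⊆ W := by
  induction α using Ordinal.limitRecOn with
  | zero => rw [R.zero]; exact hW₀
  | add_one α ih =>
    rcases R.succ α with ⟨s, ⟨hroot, hX, -, hcard⟩, h⟩ | ⟨-, h⟩ <;> rw [h]
    · refine Set.union_subset ih (Set.singleton_subset_iff.mpr (hW s hroot hX (hcard.trans ?_)))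
      exact Set.ncard_le_ncard (Set.inter_subset_inter_right _ ih)
        ((T.children_finite s).inter_of_left W)
    · exact ih
  | limit α hα ih =>
    rw [R.limit α hα]
    exact Set.iUnion₂_subset ih

theorem Z_eq_extClosure {α : Ordinal} (h : ¬ ∃ s, T.ValidExt X (R.Z α) s) :
    R.Z α = T.extClosure B X := by
  refine subset_antisymm (fun x hx => Set.mem_sInter.mpr fun W hW =>
    R.Z_subset_of_extClosed hW.1 hW.2 α hx) (Set.sInter_subset_of_mem ⟨?_, ?_⟩)
  · have h₀ := R.monotone_Z (zero_le (a := α))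
    rwa [R.zero] at h₀
  · exact T.extClosed_of_not_exists_validExt X h

theorem exists_not_exists_validExt : ∃ α : Ordinal, ¬ ∃ s, T.ValidExt X (R.Z α) s := by
  by_contra! h
  have : Countable V := T.countable
  have hstrict : StrictMono R.Z := fun α β hαβ =>
    (R.Z_ssubset_succ (h α)).trans_le (R.monotone_Z (Order.add_one_le_of_lt hαβ))
  exact not_injective_of_ordinal R.Z hstrict.injective

end Run

end RTree

theorem stmt4_general {V : Type*} (T : RTree V) (B X : Set V) :
    (∀ R : T.Run B X, ∃ α : Ordinal, ¬ ∃ s, T.ValidExt X (R.Z α) s) ∧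
    (∀ R₁ R₂ : T.Run B X, ∀ α₁ α₂ : Ordinal,
      (¬ ∃ s, T.ValidExt X (R₁.Z α₁) s) → (¬ ∃ s, T.ValidExt X (R₂.Z α₂) s) →
      R₁.Z α₁ = R₂.Z α₂) :=
  ⟨fun R => R.exists_not_exists_validExt, fun R₁ R₂ _ _ h₁ h₂ =>
    (R₁.Z_eq_extClosure h₁).trans (R₂.Z_eq_extClosure h₂).symm⟩

/-- The recursive construction of the blue overflow terminates,
and its result does not depend on the choices made during the construction. -/
theorem stmt4 {V : Type*} (T : RTree V) (B X : Set V)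
    (hB : ∀ b ∈ B, T.IsLeaf b) (hX : T.root ∉ X) :
    (∀ R : T.Run B X, ∃ α : Ordinal, ¬ ∃ s, T.ValidExt X (R.Z α) s) ∧
    (∀ R₁ R₂ : T.Run B X, ∀ α₁ α₂ : Ordinal,
      (¬ ∃ s, T.ValidExt X (R₁.Z α₁) s) → (¬ ∃ s, T.ValidExt X (R₂.Z α₂) s) →
      R₁.Z α₁ = R₂.Z α₂) :=
  stmt4_general T B X
end
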